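/- arXiv:0801.4922 — 5 statements merged into one kernel-verified Lean document; each statement's English description precedes it below -/
import Mathlib

section
/- Let a, b, c, d be four pairwise distinct complex numbers, and let e, f, g, h be complex numbers with e ∉ {b, c}, f ∉ {b, d}, g ∉ {a, d}, h ∉ {a, c}. Define the pre-exchange cross-ratio weights x₁ = −((b−c)(a−d))/((b−d)(a−c)), x₂ = −((b−e)(c−a))/((b−a)(c−e)), x₃ = −((d−f)(b−a))/((d−a)(b−f)), x₄ = −((d−b)(a−g))/((d−g)(a−b)), x₅ = −((c−h)(a−b))/((c−b)(a−h)), and the post-exchange cross-ratio weights x₁′ = −((d−b)(c−a))/((d−a)(c−b)), x₂′ = −((b−e)(c−d))/((b−d)(c−e)), x₃′ = −((d−f)(b−c))/((d−c)(b−f)), x₄′ = −((d−c)(a−g))/((d−g)(a−c)), x₅′ = −((c−h)(a−d))/((c−d)(a−h)). Then x₁′ = x₁⁻¹, x₁′ ≠ −1, x₂′ = (1+x₁)·x₂, x₃′ = (1+x₁⁻¹)⁻¹·x₃, x₄′ = (1+x₁)·x₄, and x₅′ = (1+x₁⁻¹)⁻¹·x₅. -/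
/-!
Each weight is a cross ratio `X p p' l r` of four vertices, and the exchange moves exactly one
vertex of each quadruple. Moving the right vertex `r` of the edge `p → p'` to `r'` multiplies the
weight by `1 + X r p' p r'` (and symmetrically for the left vertex). For a side of the square this
quadruple is the square itself, so the factor is `1 + x₁` or `1 + X a d b c`, and the latter is
`(1 + x₁')⁻¹ = (1 + x₁⁻¹)⁻¹` because inverting `X` and `1 + X` only permutes the quadruple.
-/

variable {K : Type*} [Field K]

def crossRatioWeight (p p' l r : K) : K :=
  -((p' - l) * (p - r)) / ((p' - r) * (p - l))

variable {p p' l l' r r' : K}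

theorem crossRatioWeight_inv (p p' l r : K) :
    (crossRatioWeight p p' l r)⁻¹ = crossRatioWeight l r p' p := by
  unfold crossRatioWeight
  rw [neg_div, inv_neg, inv_div, neg_div]
  ring

theorem crossRatioWeight_dual (p p' l r : K) :
    crossRatioWeight l r p p' = crossRatioWeight p p' l r := by
  unfold crossRatioWeight
  ring

theorem one_add_crossRatioWeight (hp'r : p' ≠ r) (hpl : p ≠ l) :
    1 + crossRatioWeight p p' l r = (p - p') * (l - r) / ((p' - r) * (p - l)) := by
  unfold crossRatioWeight
  field_simp [sub_ne_zero.mpr hp'r, sub_ne_zero.mpr hpl]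
  ring

theorem crossRatioWeight_ne_neg_one (hpp' : p ≠ p') (hlr : l ≠ r) (hp'r : p' ≠ r) (hpl : p ≠ l) :
    crossRatioWeight p p' l r ≠ -1 := by
  intro h
  have h₀ : 1 + crossRatioWeight p p' l r = 0 := by rw [h]; ring
  rw [one_add_crossRatioWeight hp'r hpl] at h₀
  simp [sub_ne_zero.mpr hpp', sub_ne_zero.mpr hlr, sub_ne_zero.mpr hp'r,
    sub_ne_zero.mpr hpl] at h₀

theorem inv_one_add_crossRatioWeight (hpp' : p ≠ p') (hlr : l ≠ r) (hp'r : p' ≠ r)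
    (hpl : p ≠ l) :
    (1 + crossRatioWeight p p' l r)⁻¹ = 1 + crossRatioWeight l p r p' := by
  rw [one_add_crossRatioWeight hp'r hpl, one_add_crossRatioWeight hpp' hlr, inv_div]
  ring

theorem crossRatioWeight_change_right (hpr : p ≠ r) (hp'r : p' ≠ r) (hp'r' : p' ≠ r') :
    crossRatioWeight p p' l r' = (1 + crossRatioWeight r p' p r') * crossRatioWeight p p' l r := by
  rw [one_add_crossRatioWeight hp'r' hpr.symm]
  unfold crossRatioWeight
  field_simp [sub_ne_zero.mpr hpr, sub_ne_zero.mpr hp'r, sub_ne_zero.mpr hp'r']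
  ring

theorem crossRatioWeight_change_left (hpl : p ≠ l) (hp'l : p' ≠ l) (hpl' : p ≠ l') :
    crossRatioWeight p p' l' r = (1 + crossRatioWeight p l l' p') * crossRatioWeight p p' l r := by
  rw [one_add_crossRatioWeight hp'l.symm hpl']
  unfold crossRatioWeight
  field_simp [sub_ne_zero.mpr hpl, sub_ne_zero.mpr hp'l, sub_ne_zero.mpr hpl']
  ring

theorem diag_exchange_cross_ratio_weights_general
    (a b c d e f g h : ℂ)
    (hab : a ≠ b) (hac : a ≠ c) (had : a ≠ d)
    (hbc : b ≠ c) (hbd : b ≠ d) (hcd : c ≠ d) :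
    let x₁ : ℂ := -((b - c) * (a - d)) / ((b - d) * (a - c))
    let x₂ : ℂ := -((b - e) * (c - a)) / ((b - a) * (c - e))
    let x₃ : ℂ := -((d - f) * (b - a)) / ((d - a) * (b - f))
    let x₄ : ℂ := -((d - b) * (a - g)) / ((d - g) * (a - b))
    let x₅ : ℂ := -((c - h) * (a - b)) / ((c - b) * (a - h))
    let x₁' : ℂ := -((d - b) * (c - a)) / ((d - a) * (c - b))
    let x₂' : ℂ := -((b - e) * (c - d)) / ((b - d) * (c - e))
    let x₃' : ℂ := -((d - f) * (b - c)) / ((d - c) * (b - f))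
    let x₄' : ℂ := -((d - c) * (a - g)) / ((d - g) * (a - c))
    let x₅' : ℂ := -((c - h) * (a - d)) / ((c - d) * (a - h))
    x₁' = x₁⁻¹ ∧ x₁' ≠ -1 ∧
    x₂' = (1 + x₁) * x₂ ∧ x₃' = (1 + x₁⁻¹)⁻¹ * x₃ ∧
    x₄' = (1 + x₁) * x₄ ∧ x₅' = (1 + x₁⁻¹)⁻¹ * x₅ := by
  show crossRatioWeight c d b a = (crossRatioWeight a b c d)⁻¹ ∧
    crossRatioWeight c d b a ≠ -1 ∧
    crossRatioWeight c b e d = (1 + crossRatioWeight a b c d) * crossRatioWeight c b e a ∧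
    crossRatioWeight b d f c = (1 + (crossRatioWeight a b c d)⁻¹)⁻¹ * crossRatioWeight b d f a ∧
    crossRatioWeight a d c g = (1 + crossRatioWeight a b c d) * crossRatioWeight a d b g ∧
    crossRatioWeight a c h d = (1 + (crossRatioWeight a b c d)⁻¹)⁻¹ * crossRatioWeight a c h b
  rw [crossRatioWeight_inv, inv_one_add_crossRatioWeight hcd hab.symm had.symm hbc.symm]
  refine ⟨rfl, crossRatioWeight_ne_neg_one hcd hab.symm had.symm hbc.symm,
    crossRatioWeight_change_right hac.symm hab.symm hbd, ?_,
    crossRatioWeight_change_left hab hbd.symm hac,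
    crossRatioWeight_change_right hab hbc.symm hcd⟩
  rw [crossRatioWeight_dual a d b c]
  exact crossRatioWeight_change_right hab.symm had.symm hcd.symm

/-- Transformation of all five cross-ratio edge weights under an embedded
diagonal exchange: the square with vertices `a = v₋`, `b = v₊`, `c = v_left`,
`d = v_right` has its diagonal `ab` replaced by `cd`; the sides `cb`, `bd`,
`ad`, `ac` carry outer triangles with third vertices `e`, `f`, `g`, `h`. -/
theorem diag_exchange_cross_ratio_weights
    (a b c d e f g h : ℂ)
    (hab : a ≠ b) (hac : a ≠ c) (had : a ≠ d)
    (hbc : b ≠ c) (hbd : b ≠ d) (hcd : c ≠ d)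
    (heb : e ≠ b) (hec : e ≠ c)
    (hfb : f ≠ b) (hfd : f ≠ d)
    (hga : g ≠ a) (hgd : g ≠ d)
    (hha : h ≠ a) (hhc : h ≠ c) :
    let x₁ : ℂ := -((b - c) * (a - d)) / ((b - d) * (a - c))
    let x₂ : ℂ := -((b - e) * (c - a)) / ((b - a) * (c - e))
    let x₃ : ℂ := -((d - f) * (b - a)) / ((d - a) * (b - f))
    let x₄ : ℂ := -((d - b) * (a - g)) / ((d - g) * (a - b))
    let x₅ : ℂ := -((c - h) * (a - b)) / ((c - b) * (a - h))
    let x₁' : ℂ := -((d - b) * (c - a)) / ((d - a) * (c - b))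
    let x₂' : ℂ := -((b - e) * (c - d)) / ((b - d) * (c - e))
    let x₃' : ℂ := -((d - f) * (b - c)) / ((d - c) * (b - f))
    let x₄' : ℂ := -((d - c) * (a - g)) / ((d - g) * (a - c))
    let x₅' : ℂ := -((c - h) * (a - d)) / ((c - d) * (a - h))
    x₁' = x₁⁻¹ ∧ x₁' ≠ -1 ∧
    x₂' = (1 + x₁) * x₂ ∧ x₃' = (1 + x₁⁻¹)⁻¹ * x₃ ∧
    x₄' = (1 + x₁) * x₄ ∧ x₅' = (1 + x₁⁻¹)⁻¹ * x₅ :=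
  diag_exchange_cross_ratio_weights_general a b c d e f g h hab hac had hbc hbd hcd
end

section
/- Let a, b, c, d be four pairwise distinct complex numbers, and let e ∈ ℂ with e ≠ b and e ≠ c. Set x₁ = −((b−c)(a−d))/((b−d)(a−c)), x₂ = −((b−e)(c−a))/((b−a)(c−e)), and x₂′ = −((b−e)(c−d))/((b−d)(c−e)). Then x₂′ = (1+x₁)·x₂. -/
/-! The three-term (Ptolemy) relation `(b - d)(a - c) - (b - c)(a - d) = (a - b)(c - d)` turns
`1 + x₁` into a single cross ratio, and multiplying it by `x₂` cancels the factors `a - b` and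
`a - c`, leaving `x₂′`. -/

theorem one_add_neg_div_eq_div {K : Type*} [Field K] {a b c d : K}
    (hbd : b ≠ d) (hac : a ≠ c) :
    1 + -((b - c) * (a - d)) / ((b - d) * (a - c)) = (a - b) * (c - d) / ((b - d) * (a - c)) := by
  have hden : (b - d) * (a - c) ≠ 0 := mul_ne_zero (sub_ne_zero.mpr hbd) (sub_ne_zero.mpr hac)
  rw [eq_div_iff hden, add_mul, div_mul_cancel₀ _ hden]
  ring

theorem diag_exchange_side_cb_general
    (a b c d e : ℂ)
    (hab : a ≠ b) (hac : a ≠ c)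
    (hbd : b ≠ d)
    (hec : e ≠ c) :
    -((b - e) * (c - d)) / ((b - d) * (c - e)) =
      (1 + -((b - c) * (a - d)) / ((b - d) * (a - c))) *
        (-((b - e) * (c - a)) / ((b - a) * (c - e))) := by
  rw [one_add_neg_div_eq_div hbd hac]
  have hba : b - a ≠ 0 := sub_ne_zero.mpr hab.symm
  have hac' : a - c ≠ 0 := sub_ne_zero.mpr hac
  have hbd' : b - d ≠ 0 := sub_ne_zero.mpr hbd
  have hce : c - e ≠ 0 := sub_ne_zero.mpr hec.symm
  field_simp
  ring

/-- Transformation of the weight of the side from `c` to `b` (outer vertex `e`)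
under a diagonal exchange. -/
theorem diag_exchange_side_cb
    (a b c d e : ℂ)
    (hab : a ≠ b) (hac : a ≠ c) (had : a ≠ d)
    (hbc : b ≠ c) (hbd : b ≠ d) (hcd : c ≠ d)
    (heb : e ≠ b) (hec : e ≠ c) :
    -((b - e) * (c - d)) / ((b - d) * (c - e)) =
      (1 + -((b - c) * (a - d)) / ((b - d) * (a - c))) *
        (-((b - e) * (c - a)) / ((b - a) * (c - e))) :=
  diag_exchange_side_cb_general a b c d e hab hac hbd hec
end

section
/- Let a, b, c, d be four pairwise distinct complex numbers, and let g ∈ ℂ with g ≠ a and g ≠ d. Set x₁ = −((b−c)(a−d))/((b−d)(a−c)), x₄ = −((d−b)(a−g))/((d−g)(a−b)), and x₄′ = −((d−c)(a−g))/((d−g)(a−c)). Then x₄′ = (1+x₁)·x₄. -/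
/-!
The three-term relation of cross-ratios gives `1 + x₁ = (a - b)(c - d) / ((b - d)(a - c))`;
multiplying by `x₄`, the factors `a - b` and `b - d` cancel and what is left is `x₄′`.
-/

/-- The weight `X(p, p', l, r)`, with `l` and `r` the left and right third vertices. -/
def edgeWeight {K : Type*} [Field K] (p p' l r : K) : K :=
  -((p' - l) * (p - r)) / ((p' - r) * (p - l))

theorem one_add_edgeWeight {K : Type*} [Field K] {p p' l r : K} (hpl : p ≠ l) (hp'r : p' ≠ r) :
    1 + edgeWeight p p' l r = (p - p') * (l - r) / ((p' - r) * (p - l)) := by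
  have hden : (p' - r) * (p - l) ≠ 0 := mul_ne_zero (sub_ne_zero.mpr hp'r) (sub_ne_zero.mpr hpl)
  rw [edgeWeight, ← div_self hden, ← add_div]
  congr 1
  ring

theorem diag_exchange_side_ad_general
    (a b c d g : ℂ)
    (hab : a ≠ b) (hac : a ≠ c)
    (hbd : b ≠ d) :
    -((d - c) * (a - g)) / ((d - g) * (a - c)) =
      (1 + -((b - c) * (a - d)) / ((b - d) * (a - c))) *
        (-((d - b) * (a - g)) / ((d - g) * (a - b))) := by
  change edgeWeight a d c g = (1 + edgeWeight a b c d) * edgeWeight a d b g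
  have hcancel : (a - b) * (b - d) ≠ 0 := mul_ne_zero (sub_ne_zero.mpr hab) (sub_ne_zero.mpr hbd)
  rw [one_add_edgeWeight hac hbd, edgeWeight, edgeWeight, div_mul_div_comm,
    ← mul_div_mul_left _ _ hcancel]
  congr 1 <;> ring

/-- Transformation of the weight of the side from `a` to `d` (outer vertex `g`)
under a diagonal exchange. -/
theorem diag_exchange_side_ad
    (a b c d g : ℂ)
    (hab : a ≠ b) (hac : a ≠ c) (had : a ≠ d)
    (hbc : b ≠ c) (hbd : b ≠ d) (hcd : c ≠ d)
    (hga : g ≠ a) (hgd : g ≠ d) :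
    -((d - c) * (a - g)) / ((d - g) * (a - c)) =
      (1 + -((b - c) * (a - d)) / ((b - d) * (a - c))) *
        (-((d - b) * (a - g)) / ((d - g) * (a - b))) :=
  diag_exchange_side_ad_general a b c d g hab hac hbd
end

section
/- Let A be an associative algebra over ℂ, let q be a nonzero complex number, let k be a natural number, let x : Fin k → A, and let σ : Fin k → Fin k → ℤ satisfy σ v u = −(σ u v) for all u, v and x u * x v = q^(2·σ u v) • (x v * x u) for all u, v. Then for every permutation τ of Fin k, q^(−Σ_{u<v} σ (τ u) (τ v)) • (x (τ 1) * x (τ 2) * ⋯ * x (τ k)) = q^(−Σ_{u<v} σ u v) • (x 1 * x 2 * ⋯ * x k), where the products are taken in increasing order of the index. -/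
/-!
Encode a word in the generators as a list of indices and let `E(l) = Σ_{i<j} σ(lᵢ, lⱼ)`.
Permutations of lists are generated by adjacent swaps. Swapping the adjacent letters
`a, b` multiplies the product by `q^(2σ(b,a))` (the `q`-commutation relation). Since σ is
antisymmetric, the swap also changes `E` by exactly `σ(b,a) - σ(a,b) = 2σ(b,a)`, so the
factor `q^(-E)` absorbs the change.
-/

open Finset

section WeylOrdering

variable {ι K A : Type*}

/-- `weylExponent σ [i₁, …, iₙ] = Σ_{u<v} σ i_u i_v`. -/
def weylExponent (σ : ι → ι → ℤ) : List ι → ℤ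
  | [] => 0
  | a :: l => (l.map (σ a)).sum + weylExponent σ l

variable [Semifield K] [Semiring A] [Algebra K A]

def weylOrdering (q : K) (σ : ι → ι → ℤ) (x : ι → A) (l : List ι) : A :=
  q ^ (-weylExponent σ l) • (l.map x).prod

theorem weylOrdering_cons (q : K) (hq : q ≠ 0) (σ : ι → ι → ℤ) (x : ι → A) (a : ι)
    (l : List ι) :
    weylOrdering q σ x (a :: l) =
      q ^ (-(l.map (σ a)).sum) • (x a * weylOrdering q σ x l) := by
  simp only [weylOrdering, weylExponent, List.map_cons, List.prod_cons, neg_add,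
    zpow_add₀ hq, mul_smul, mul_smul_comm]

theorem weylOrdering_perm (q : K) (hq : q ≠ 0) (σ : ι → ι → ℤ) (x : ι → A)
    (hanti : ∀ u v, σ v u = -σ u v)
    (hcomm : ∀ u v, x u * x v = q ^ (2 * σ u v) • (x v * x u))
    {l l' : List ι} (h : l.Perm l') :
    weylOrdering q σ x l = weylOrdering q σ x l' := by
  induction h with
  | nil => rfl
  | cons a hperm ih =>
    rw [weylOrdering_cons q hq, weylOrdering_cons q hq, ih, (hperm.map (σ a)).sum_eq]
  | swap a b l =>
    simp only [weylOrdering, weylExponent, List.map_cons, List.prod_cons, List.sum_cons]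
    rw [← mul_assoc (x b) (x a), hcomm b a, smul_mul_assoc, mul_assoc, smul_smul,
      ← zpow_add₀ hq, hanti a b]
    congr 2
    ring
  | trans _ _ ih₁ ih₂ => exact ih₁.trans ih₂

end WeylOrdering

theorem sum_filter_lt_eq_sum_sum_Ioi {α M : Type*} [Fintype α] [LinearOrder α]
    [LocallyFiniteOrderTop α] [AddCommMonoid M] (g : α → α → M) :
    ∑ p ∈ univ.filter (fun p : α × α => p.1 < p.2), g p.1 p.2 =
      ∑ u, ∑ v ∈ Ioi u, g u v := by
  rw [sum_filter, Fintype.sum_prod_type]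
  refine sum_congr rfl fun u _ => ?_
  rw [← sum_filter]
  congr 1
  ext v
  simp

theorem weylExponent_ofFn_eq_sum_Ioi {ι : Type*} (σ : ι → ι → ℤ) :
    ∀ {k : ℕ} (f : Fin k → ι),
      weylExponent σ (List.ofFn f) = ∑ u, ∑ v ∈ Ioi u, σ (f u) (f v)
  | 0, f => by simp [weylExponent]
  | k + 1, f => by
    rw [List.ofFn_succ, weylExponent, List.map_ofFn, List.sum_ofFn,
      weylExponent_ofFn_eq_sum_Ioi, Fin.sum_univ_succ, Fin.sum_Ioi_zero]
    simp only [Function.comp_apply, Fin.sum_Ioi_succ]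

theorem weylExponent_ofFn {ι : Type*} (σ : ι → ι → ℤ) {k : ℕ} (f : Fin k → ι) :
    weylExponent σ (List.ofFn f) =
      ∑ p ∈ univ.filter (fun p : Fin k × Fin k => p.1 < p.2), σ (f p.1) (f p.2) := by
  rw [sum_filter_lt_eq_sum_sum_Ioi fun u v => σ (f u) (f v),
    weylExponent_ofFn_eq_sum_Ioi]

open Finset in
/-- The Weyl quantum ordering `q^(-Σ_{u<v} σ_{i_u i_v}) X_{i₁} ⋯ X_{i_k}` of a
product of `q`-commuting elements is independent of the ordering of the
factors. -/
theorem weyl_quantum_ordering_perm_invariant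
    (A : Type*) [Ring A] [Algebra ℂ A]
    (q : ℂ) (hq : q ≠ 0) (k : ℕ)
    (x : Fin k → A) (σ : Fin k → Fin k → ℤ)
    (hanti : ∀ u v, σ v u = -(σ u v))
    (hcomm : ∀ u v, x u * x v = q ^ (2 * σ u v) • (x v * x u))
    (τ : Equiv.Perm (Fin k)) :
    q ^ (-(∑ p ∈ univ.filter (fun p : Fin k × Fin k => p.1 < p.2),
          σ (τ p.1) (τ p.2))) • (List.ofFn fun u => x (τ u)).prod =
      q ^ (-(∑ p ∈ univ.filter (fun p : Fin k × Fin k => p.1 < p.2),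
          σ p.1 p.2)) • (List.ofFn x).prod := by
  have h := weylOrdering_perm q hq σ x hanti hcomm (τ.ofFn_comp_perm id)
  simp only [weylOrdering, weylExponent_ofFn, List.map_ofFn, Function.comp_id,
    Function.id_comp, id_eq] at h
  exact h
end

section
/- Let A be an associative algebra over ℂ, let N ≥ 1 be a natural number, let q be a nonzero complex number with q^N = (−1)^(N+1), let k be a natural number, let x : Fin k → A, and let σ : Fin k → Fin k → ℤ satisfy σ v u = −(σ u v) for all u, v and x u * x v = q^(2·σ u v) • (x v * x u) for all u, v. Set P = q^(−Σ_{u<v} σ u v) • (x 1 * x 2 * ⋯ * x k) (product in increasing index order). Then P^N = x 1^N * x 2^N * ⋯ * x k^N. -/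
/-! Moving each factor `x u` of `x₁ ⋯ x_k` leftwards past the powers `x v ^ n` with `v > u`
gives `(x₁ ⋯ x_k) ^ n = C ^ (n.choose 2) • x₁ ^ n ⋯ x_k ^ n` with `C = (q ^ (-Σ_{u<v} σ u v)) ^ 2`.
Together with the normalising factor, `P ^ N` is therefore `x₁ ^ N ⋯ x_k ^ N` times
`q ^ (-N² Σ_{u<v} σ u v) = (-1) ^ (-N (N + 1) Σ_{u<v} σ u v) = 1`. -/

section QCommute

open Finset

variable {K A : Type*} [CommSemiring K] [Semiring A] [Algebra K A]

def QCommute (c : K) (a b : A) : Prop := a * b = c • (b * a)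

theorem QCommute.pow_left {c : K} {a b : A} (h : QCommute c a b) (n : ℕ) :
    QCommute (c ^ n) (a ^ n) b := by
  induction n with
  | zero => simp [QCommute]
  | succ n ih =>
    rw [QCommute, pow_succ, mul_assoc, h, mul_smul_comm, ← mul_assoc, ih, smul_mul_assoc,
      smul_smul, mul_assoc, ← pow_succ, ← pow_succ']

theorem QCommute.prod_ofFn_left {k : ℕ} {c : Fin k → K} {y : Fin k → A} {a : A}
    (h : ∀ v, QCommute (c v) (y v) a) : QCommute (∏ v, c v) (List.ofFn y).prod a := by
  induction k with
  | zero => simp [QCommute]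
  | succ k ih =>
    rw [QCommute, List.ofFn_succ, List.prod_cons, mul_assoc, ih fun v => h v.succ,
      mul_smul_comm, ← mul_assoc, h 0, smul_mul_assoc, smul_smul, Fin.prod_univ_succ,
      mul_comm (c 0), mul_assoc]

theorem Fin.prod_filter_lt_succ {M : Type*} [CommMonoid M] {k : ℕ}
    (f : Fin (k + 1) → Fin (k + 1) → M) :
    ∏ p ∈ univ.filter (fun p : Fin (k + 1) × Fin (k + 1) => p.1 < p.2), f p.1 p.2 =
      (∏ v : Fin k, f 0 v.succ) *
        ∏ p ∈ univ.filter (fun p : Fin k × Fin k => p.1 < p.2), f p.1.succ p.2.succ := by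
  simp [prod_filter, Fintype.prod_prod_type, Fin.prod_univ_succ, Fin.succ_pos]

theorem prod_ofFn_pow_mul_prod_ofFn {k : ℕ} {x : Fin k → A} {c : Fin k → Fin k → K}
    (h : ∀ u v, u < v → QCommute (c u v) (x v) (x u)) (n : ℕ) :
    (List.ofFn fun u => x u ^ n).prod * (List.ofFn x).prod =
      (∏ p ∈ univ.filter (fun p : Fin k × Fin k => p.1 < p.2), c p.1 p.2) ^ n •
        (List.ofFn fun u => x u ^ (n + 1)).prod := by
  induction k with
  | zero => simp
  | succ k ih =>
    set Y := (List.ofFn fun v : Fin k => x v.succ ^ n).prod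
    set Z := (List.ofFn fun v : Fin k => x v.succ).prod
    have hY : QCommute ((∏ v : Fin k, c 0 v.succ) ^ n) Y (x 0) := by
      rw [← prod_pow]
      exact QCommute.prod_ofFn_left fun v => (h 0 v.succ v.succ_pos).pow_left n
    have hYZ := ih fun u v huv => h u.succ v.succ (Fin.succ_lt_succ_iff.2 huv)
    rw [List.ofFn_succ, List.ofFn_succ (f := x), List.ofFn_succ (f := fun u => x u ^ (n + 1)),
      List.prod_cons, List.prod_cons, List.prod_cons, Fin.prod_filter_lt_succ, mul_pow]
    calc x 0 ^ n * Y * (x 0 * Z) = x 0 ^ n * (Y * x 0) * Z := by simp only [mul_assoc]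
      _ = (∏ v : Fin k, c 0 v.succ) ^ n • (x 0 ^ (n + 1) * (Y * Z)) := by
        rw [hY, mul_smul_comm, smul_mul_assoc, ← mul_assoc, ← mul_assoc, ← pow_succ]
      _ = _ := by rw [hYZ, mul_smul_comm, smul_smul]

theorem prod_ofFn_pow {k : ℕ} {x : Fin k → A} {c : Fin k → Fin k → K}
    (h : ∀ u v, u < v → QCommute (c u v) (x v) (x u)) (n : ℕ) :
    (List.ofFn x).prod ^ n =
      (∏ p ∈ univ.filter (fun p : Fin k × Fin k => p.1 < p.2), c p.1 p.2) ^ n.choose 2 •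
        (List.ofFn fun u => x u ^ n).prod := by
  induction n with
  | zero => simp
  | succ n ih =>
    rw [pow_succ, ih, smul_mul_assoc, prod_ofFn_pow_mul_prod_ofFn h, smul_smul, ← pow_add,
      Nat.choose_succ_succ', Nat.choose_one_right, add_comm]

end QCommute

theorem Nat.add_two_mul_choose_two (n : ℕ) : n + 2 * n.choose 2 = n * n := by
  induction n with
  | zero => rfl
  | succ n ih => rw [Nat.choose_succ_succ', Nat.choose_one_right]; linarith

theorem zpow_sum₀ {G₀ ι : Type*} [CommGroupWithZero G₀] {q : G₀} (hq : q ≠ 0) (s : Finset ι)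
    (f : ι → ℤ) : ∏ i ∈ s, q ^ f i = q ^ ∑ i ∈ s, f i := by
  induction s using Finset.cons_induction with
  | empty => simp
  | cons i s _ ih => rw [Finset.prod_cons, Finset.sum_cons, ih, zpow_add₀ hq]

theorem zpow_pow_mul_self_eq_one {K : Type*} [DivisionRing K] {q : K} {N : ℕ}
    (hqN : q ^ N = (-1) ^ (N + 1)) (m : ℤ) : (q ^ m) ^ (N * N) = 1 := by
  calc (q ^ m) ^ (N * N) = (q ^ N) ^ ((N : ℤ) * m) := by
        rw [← zpow_natCast, ← zpow_natCast q, ← zpow_mul, ← zpow_mul]; congr 1; push_cast; ring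
    _ = (-1) ^ ((N : ℤ) * (N + 1) * m) := by
        rw [hqN, ← zpow_natCast, ← zpow_mul]; congr 1; push_cast; ring
    _ = 1 := ((Int.even_mul_succ_self N).mul_right m).neg_one_zpow

open Finset in
theorem weyl_quantum_ordering_pow_general
    (A : Type*) [Ring A] [Algebra ℂ A]
    (N : ℕ)
    (q : ℂ) (hq : q ≠ 0) (hqN : q ^ N = (-1 : ℂ) ^ (N + 1)) (k : ℕ)
    (x : Fin k → A) (σ : Fin k → Fin k → ℤ)
    (hanti : ∀ u v, σ v u = -(σ u v))
    (hcomm : ∀ u v, x u * x v = q ^ (2 * σ u v) • (x v * x u)) :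
    (q ^ (-(∑ p ∈ univ.filter (fun p : Fin k × Fin k => p.1 < p.2),
          σ p.1 p.2)) • (List.ofFn x).prod) ^ N =
      (List.ofFn fun u => x u ^ N).prod := by
  have hx : ∀ u v, u < v → QCommute ((q ^ (-σ u v)) ^ 2) (x v) (x u) := fun u v _ => by
    rw [QCommute, hcomm, hanti, mul_comm, zpow_mul, zpow_two, sq]
  rw [smul_pow, prod_ofFn_pow hx, prod_pow, zpow_sum₀ hq, sum_neg_distrib, smul_smul, ← pow_mul,
    ← pow_add, Nat.add_two_mul_choose_two, zpow_pow_mul_self_eq_one hqN, one_smul]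

open Finset in
/-- If `q ^ N = (-1) ^ (N + 1)`, the Weyl quantum ordering
`P = q^(-Σ_{u<v} σ_{u v}) x₁ ⋯ x_k` of a product of `q`-commuting elements
satisfies `P ^ N = x₁ ^ N ⋯ x_k ^ N`. -/
theorem weyl_quantum_ordering_pow
    (A : Type*) [Ring A] [Algebra ℂ A]
    (N : ℕ) (hN : 1 ≤ N)
    (q : ℂ) (hq : q ≠ 0) (hqN : q ^ N = (-1 : ℂ) ^ (N + 1)) (k : ℕ)
    (x : Fin k → A) (σ : Fin k → Fin k → ℤ)
    (hanti : ∀ u v, σ v u = -(σ u v))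
    (hcomm : ∀ u v, x u * x v = q ^ (2 * σ u v) • (x v * x u)) :
    (q ^ (-(∑ p ∈ univ.filter (fun p : Fin k × Fin k => p.1 < p.2),
          σ p.1 p.2)) • (List.ofFn x).prod) ^ N =
      (List.ofFn fun u => x u ^ N).prod :=
  weyl_quantum_ordering_pow_general A N q hq hqN k x σ hanti hcomm
end
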